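/- arXiv:1111.0145 — 4 statements merged into one kernel-verified Lean document; each statement's English description precedes it below -/
import Mathlib

section
/- Let $R$ be a commutative ring and $q, s, t \in R$ units. On $V^{\otimes 4}$ with $V = R^2$, let $R^q_2 = \mathrm{id} \otimes M_q \otimes \mathrm{id}$ (acting on factors 2,3), $R^s_3 = \mathrm{id} \otimes \mathrm{id} \otimes M_s$ (acting on factors 3,4), and $R^t_1 = M_t \otimes \mathrm{id} \otimes \mathrm{id}$ (acting on factors 1,2), where $M_q$ is the cup-cap matrix with nonzero entries $M_q[(1,2),(1,2)]=q$, $M_q[(1,2),(2,1)]=1$, $M_q[(2,1),(1,2)]=1$, $M_q[(2,1),(2,1)]=q^{-1}$. Then $(R^s_3 R^t_1)\, R^q_2\, (R^s_3 R^t_1) = \big(\tfrac{q}{st} + \tfrac{st}{q}\big)\, R^s_3 R^t_1$. -/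
/-- The cup-cap matrix `M_q` on `R² ⊗ R²`, indexed by pairs `(i,j)` with `i,j : Fin 2`
(`0` corresponds to `v₁`, `1` to `v₂`). Its only nonzero entries are
`M[(1,2),(1,2)] = q`, `M[(1,2),(2,1)] = 1`, `M[(2,1),(1,2)] = 1`, `M[(2,1),(2,1)] = q⁻¹`. -/
def cupcap {R : Type*} [CommRing R] (q : Rˣ) :
    Matrix (Fin 2 × Fin 2) (Fin 2 × Fin 2) R :=
  Matrix.of fun p p' =>
    if p = (0, 1) ∧ p' = (0, 1) then (q : R)
    else if p = (0, 1) ∧ p' = (1, 0) then 1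
    else if p = (1, 0) ∧ p' = (0, 1) then 1
    else if p = (1, 0) ∧ p' = (1, 0) then ((q⁻¹ : Rˣ) : R)
    else 0

/-- The operator on `V^{⊗ m}` (`V = R²`) acting as the cup-cap matrix `M_q` on the
tensor factors `i`, `j` and as the identity elsewhere, written as a matrix indexed
by basis sequences `Fin m → Fin 2`. -/
def cupcapOp {R : Type*} [CommRing R] {m : ℕ} (q : Rˣ) (i j : Fin m) :
    Matrix (Fin m → Fin 2) (Fin m → Fin 2) R :=
  Matrix.of fun β α =>
    (if ∀ k, k ≠ i → k ≠ j → β k = α k then (1 : R) else 0) *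
      cupcap q (β i, β j) (α i, α j)

-- rank one factors
def vv {R : Type*} [CommRing R] (q : Rˣ) : Fin 2 × Fin 2 → R :=
  fun p => if p = (0,1) then (q : R) else if p = (1,0) then 1 else 0

def ww {R : Type*} [CommRing R] (q : Rˣ) : Fin 2 × Fin 2 → R :=
  fun p => if p = (0,1) then 1 else if p = (1,0) then ((q⁻¹ : Rˣ) : R) else 0

lemma cupcap_eq {R : Type*} [CommRing R] (q : Rˣ) (p p' : Fin 2 × Fin 2) :
    cupcap q p p' = vv q p * ww q p' := by
  rcases p with ⟨a, b⟩; rcases p' with ⟨c, d⟩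
  fin_cases a <;> fin_cases b <;> fin_cases c <;> fin_cases d <;>
    simp [cupcap, vv, ww, Prod.ext_iff, Units.mul_inv]

lemma forall4 (P : Fin 4 → Prop) : (∀ k, P k) ↔ P 0 ∧ P 1 ∧ P 2 ∧ P 3 :=
  ⟨fun h => ⟨h 0, h 1, h 2, h 3⟩, fun ⟨a, b, c, d⟩ k => by fin_cases k <;> assumption⟩

lemma E_eq {R : Type*} [CommRing R] (s t : Rˣ) :
    (cupcapOp (m := 4) s 2 3 * cupcapOp t 0 1) =
      Matrix.of (fun β α =>
        cupcap t (β 0, β 1) (α 0, α 1) * cupcap s (β 2, β 3) (α 2, α 3)) := by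
  ext β α
  rw [Matrix.mul_apply]
  rw [Finset.sum_eq_single (![β 0, β 1, α 2, α 3])]
  · simp [cupcapOp, forall4, mul_comm]
  · intro γ _ hne
    by_cases h1 : ∀ k : Fin 4, k ≠ 2 → k ≠ 3 → β k = γ k
    · by_cases h2 : ∀ k : Fin 4, k ≠ 0 → k ≠ 1 → γ k = α k
      · exfalso
        apply hne
        funext k
        fin_cases k
        · exact ((h1 0 (by decide) (by decide)).symm).trans rfl ▸ (h1 0 (by decide) (by decide)).symm
        · exact (h1 1 (by decide) (by decide)).symm
        · exact h2 2 (by decide) (by decide)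
        · exact h2 3 (by decide) (by decide)
      · simp [cupcapOp, h2]
    · simp [cupcapOp, h1]
  · intro h; exact absurd (Finset.mem_univ _) h

def e4 : (Fin 2 × Fin 2 × Fin 2 × Fin 2) ≃ (Fin 4 → Fin 2) where
  toFun p := ![p.1, p.2.1, p.2.2.1, p.2.2.2]
  invFun f := (f 0, f 1, f 2, f 3)
  left_inv := by decide
  right_inv := by decide

lemma sum_fn4 {M : Type*} [AddCommMonoid M] (g : (Fin 4 → Fin 2) → M) :
    ∑ f, g f = ∑ a, ∑ b, ∑ c, ∑ d, g ![a, b, c, d] := by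
  rw [← e4.sum_comp g]
  simp [Fintype.sum_prod_type, e4]


/-- The 'sandwich lemma': on `V^{⊗4}`, with `R^q_2` on factors (2,3), `R^s_3` on
factors (3,4) and `R^t_1` on factors (1,2) (here 0-indexed as (1,2), (2,3), (0,1)),
`(R^s_3 R^t_1) R^q_2 (R^s_3 R^t_1) = (q/(st) + st/q) • (R^s_3 R^t_1)`. -/
theorem sandwich_lemma {R : Type*} [CommRing R] (q s t : Rˣ) :
    (cupcapOp (m := 4) s 2 3 * cupcapOp t 0 1) * cupcapOp q 1 2 *
        (cupcapOp s 2 3 * cupcapOp t 0 1) =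
      ((q : R) * (((s * t)⁻¹ : Rˣ) : R) + ((s * t : Rˣ) : R) * ((q⁻¹ : Rˣ) : R)) •
        (cupcapOp s 2 3 * cupcapOp t 0 1) := by
  rw [E_eq]
  set κ : R := (q : R) * (((s * t)⁻¹ : Rˣ) : R) + ((s * t : Rˣ) : R) * ((q⁻¹ : Rˣ) : R) with hκ
  set E : Matrix (Fin 4 → Fin 2) (Fin 4 → Fin 2) R :=
    Matrix.of (fun β α =>
      cupcap t (β 0, β 1) (α 0, α 1) * cupcap s (β 2, β 3) (α 2, α 3)) with hE
  have hEapp : ∀ β α : Fin 4 → Fin 2,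
      E β α = cupcap t (β 0, β 1) (α 0, α 1) * cupcap s (β 2, β 3) (α 2, α 3) :=
    fun β α => rfl
  have key : (∑ γ : Fin 4 → Fin 2, ∑ δ : Fin 4 → Fin 2,
      (ww t (γ 0, γ 1) * ww s (γ 2, γ 3)) * cupcapOp q 1 2 γ δ *
        (vv t (δ 0, δ 1) * vv s (δ 2, δ 3))) = κ := by
    rw [sum_fn4]
    simp only [sum_fn4, Fin.sum_univ_two]
    simp [cupcapOp, cupcap, vv, ww, forall4, hκ, Prod.ext_iff, mul_inv_rev, Units.val_mul]
    ring
  ext β α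
  rw [Matrix.mul_apply]
  have lhs_eq : ∀ δ, (E * cupcapOp (m := 4) q 1 2) β δ * E δ α =
      ∑ γ : Fin 4 → Fin 2,
        (vv t (β 0, β 1) * vv s (β 2, β 3) * (ww t (α 0, α 1) * ww s (α 2, α 3))) *
        ((ww t (γ 0, γ 1) * ww s (γ 2, γ 3)) * cupcapOp q 1 2 γ δ *
          (vv t (δ 0, δ 1) * vv s (δ 2, δ 3))) := by
    intro δ
    rw [Matrix.mul_apply, Finset.sum_mul]
    refine Finset.sum_congr rfl fun γ _ => ?_
    rw [hEapp, hEapp, cupcap_eq, cupcap_eq, cupcap_eq, cupcap_eq]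
    ring
  calc (∑ δ, (E * cupcapOp (m := 4) q 1 2) β δ * E δ α)
      = ∑ δ, ∑ γ : Fin 4 → Fin 2,
        (vv t (β 0, β 1) * vv s (β 2, β 3) * (ww t (α 0, α 1) * ww s (α 2, α 3))) *
        ((ww t (γ 0, γ 1) * ww s (γ 2, γ 3)) * cupcapOp q 1 2 γ δ *
          (vv t (δ 0, δ 1) * vv s (δ 2, δ 3))) := Finset.sum_congr rfl fun δ _ => lhs_eq δ
    _ = (vv t (β 0, β 1) * vv s (β 2, β 3) * (ww t (α 0, α 1) * ww s (α 2, α 3))) *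
        ∑ γ : Fin 4 → Fin 2, ∑ δ : Fin 4 → Fin 2,
          (ww t (γ 0, γ 1) * ww s (γ 2, γ 3)) * cupcapOp q 1 2 γ δ *
            (vv t (δ 0, δ 1) * vv s (δ 2, δ 3)) := by
        rw [Finset.mul_sum, Finset.sum_comm]
        exact Finset.sum_congr rfl fun δ _ => by rw [Finset.mul_sum]
    _ = (κ • E) β α := by
        rw [key, Matrix.smul_apply, hEapp, smul_eq_mul, cupcap_eq, cupcap_eq]
        ring
end

section
/- Let $R$ be a commutative ring and $q_1, q_2 \in R$ units. On $V^{\otimes 2}$ with $V = R^2$, with indices taken cyclically (so position 3 means position 1), define $\mathcal{O}$ as the cup-cap operator $M_{q_1}$ acting on factors $(1,2)$, and define $\mathcal{E}$ as the 'wrap-around' cup-cap operator with parameter $q_2$ acting on factors $(2,1)$ (i.e., on basis element $v_{\alpha_1} \otimes v_{\alpha_2}$ it gives $\delta'(\alpha_2,\alpha_1)\big( q_2^{2-\alpha_2}\, v_2 \otimes v_1 + q_2^{1-\alpha_2}\, v_1 \otimes v_2 \big)$, where $\delta'(a,b) = 1$ if $a \neq b$ and $0$ otherwise). Then $\mathcal{O}\mathcal{E}\mathcal{O}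 = \big(\tfrac{q_1}{q_2} + 2 + \tfrac{q_2}{q_1}\big)\, \mathcal{O}$ and $\mathcal{E}\mathcal{O}\mathcal{E} = \big(\tfrac{q_1}{q_2} + 2 + \tfrac{q_2}{q_1}\big)\, \mathcal{E}$. -/
lemma sum_fun_two {R : Type*} [AddCommMonoid R] (f : (Fin 2 → Fin 2) → R) :
    ∑ g : Fin 2 → Fin 2, f g = f ![0,0] + f ![0,1] + f ![1,0] + f ![1,1] := by
  rw [← (piFinTwoEquiv (fun _ => Fin 2)).symm.sum_comp, Fintype.sum_prod_type,
    Fin.sum_univ_two, Fin.sum_univ_two, Fin.sum_univ_two]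
  have h : ∀ a b : Fin 2, (piFinTwoEquiv (fun _ => Fin 2)).symm (a, b) = ![a, b] := by
    intro a b; funext k; fin_cases k <;> rfl
  rw [h, h, h, h, ← add_assoc]

set_option maxHeartbeats 1600000 in
/-- Periodic base case: on `V^{⊗2}` with cyclic indices, `O` is the cup-cap operator
`M_{q₁}` on factors (1,2) and `E` is the wrap-around cup-cap operator with parameter
`q₂` on factors (2,1); then `OEO = (q₁/q₂ + 2 + q₂/q₁) O` and
`EOE = (q₁/q₂ + 2 + q₂/q₁) E`. -/
theorem periodic_base {R : Type*} [CommRing R] (q₁ q₂ : Rˣ) :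
    (cupcapOp (m := 2) q₁ 0 1 * cupcapOp q₂ 1 0 * cupcapOp q₁ 0 1 =
      ((q₁ : R) * ((q₂⁻¹ : Rˣ) : R) + 2 + (q₂ : R) * ((q₁⁻¹ : Rˣ) : R)) •
        cupcapOp q₁ 0 1) ∧
    (cupcapOp (m := 2) q₂ 1 0 * cupcapOp q₁ 0 1 * cupcapOp q₂ 1 0 =
      ((q₁ : R) * ((q₂⁻¹ : Rˣ) : R) + 2 + (q₂ : R) * ((q₁⁻¹ : Rˣ) : R)) •
        cupcapOp q₂ 1 0) := by
  constructor <;>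
  · ext β α
    obtain ⟨b0, b1, rfl⟩ : ∃ a b, β = ![a, b] := ⟨β 0, β 1, by funext k; fin_cases k <;> rfl⟩
    obtain ⟨a0, a1, rfl⟩ : ∃ a b, α = ![a, b] := ⟨α 0, α 1, by funext k; fin_cases k <;> rfl⟩
    fin_cases b0 <;> fin_cases b1 <;> fin_cases a0 <;> fin_cases a1 <;>
      simp [cupcapOp, cupcap, Matrix.mul_apply, sum_fun_two, Fin.forall_fin_two,
        Prod.ext_iff, smul_eq_mul] <;> ring_nf <;>
      first
        | linear_combination (-(q₂ : R)) * Units.mul_inv q₁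
        | linear_combination (1 : R) * Units.mul_inv q₁
        | linear_combination (-((q₂⁻¹ : Rˣ) : R)) * Units.mul_inv q₁
        | linear_combination (-(q₁ : R)) * Units.mul_inv q₂
        | linear_combination (1 : R) * Units.mul_inv q₂
        | linear_combination (-((q₁⁻¹ : Rˣ) : R)) * Units.mul_inv q₂
end

section
/- Let $k$ be an algebraically closed field. For every tuple $(\delta_L, \delta_R, \kappa) \in k^3$, there exist units $x_0, y_0, z_0, w_0 \in k$ such that $\delta_L = (x_0 + x_0^{-1})(y_0 + y_0^{-1})$, $\delta_R = (z_0 + z_0^{-1})(w_0 + w_0^{-1})$, and $\kappa = \frac{x_0 y_0}{z_0 w_0} + 2 + \frac{z_0 w_0}{x_0 y_0}$. -/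
open Polynomial

lemma exists_quad_root {k : Type*} [Field k] [IsAlgClosed k] (b c : k) (hc : c ≠ 0) :
    ∃ t : k, t ≠ 0 ∧ t * t + b * t + c = 0 := by
  obtain ⟨t, ht⟩ := IsAlgClosed.exists_root (C 1 * X ^ 2 + C b * X + C c)
    (by rw [Polynomial.degree_quadratic one_ne_zero]; exact two_ne_zero)
  have h : t * t + b * t + c = 0 := by
    have := ht
    simp [Polynomial.IsRoot, Polynomial.eval_add, sq] at this
    linear_combination this
  refine ⟨t, fun h0 => hc ?_, h⟩
  simpa [h0] using h

/-- Sub-case of Proposition 3.2: the parameters `x₀, y₀, z₀, w₀` can be chosen to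
realise any `(δ_L, δ_R, κ) ∈ k³`. -/
theorem exists_boundary_params {k : Type*} [Field k] [IsAlgClosed k] (δL δR κ : k) :
    ∃ x₀ y₀ z₀ w₀ : k, x₀ ≠ 0 ∧ y₀ ≠ 0 ∧ z₀ ≠ 0 ∧ w₀ ≠ 0 ∧
      δL = (x₀ + x₀⁻¹) * (y₀ + y₀⁻¹) ∧
      δR = (z₀ + z₀⁻¹) * (w₀ + w₀⁻¹) ∧
      κ = x₀ * y₀ / (z₀ * w₀) + 2 + z₀ * w₀ / (x₀ * y₀) := by
  classical
  obtain ⟨a, ha⟩ := IsAlgClosed.exists_pow_nat_eq (-1 : k) zero_lt_two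
  obtain ⟨x, hx⟩ := Infinite.exists_notMem_finset ({0, a, -a} : Finset k)
  simp only [Finset.mem_insert, Finset.mem_singleton, not_or] at hx
  obtain ⟨hx0, hxa, hxna⟩ := hx
  have hx2 : x * x + 1 ≠ 0 := by
    intro h
    have h2 : (x - a) * (x + a) = 0 := by rw [sq] at ha; linear_combination h - ha
    rcases mul_eq_zero.1 h2 with h' | h'
    · exact hxa (by linear_combination h')
    · exact hxna (by linear_combination h')
  have hxx : x + x⁻¹ ≠ 0 := by
    intro h
    apply hx2
    field_simp at h
    linear_combination h
  -- y₀
  obtain ⟨y, hy0, hy⟩ := exists_quad_root (-(δL / (x + x⁻¹))) 1 one_ne_zero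
  have hL : δL = (x + x⁻¹) * (y + y⁻¹) := by
    field_simp
    field_simp [show x ^ 2 + 1 ≠ 0 by rw [sq]; exact hx2] at hy
    linear_combination -hy
  have hP : x * y ≠ 0 := mul_ne_zero hx0 hy0
  -- p₀
  obtain ⟨p, hp0, hp⟩ := exists_quad_root (-((κ - 2) * (x * y))) ((x * y) ^ 2) (pow_ne_zero 2 hP)
  have hκ : κ = x * y / p + 2 + p / (x * y) := by
    field_simp
    linear_combination -hp
  -- q₀
  obtain ⟨q, hq0, hq⟩ := exists_quad_root (p + p⁻¹ - δR) 1 one_ne_zero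
  have hq' : q + q⁻¹ = δR - p - p⁻¹ := by
    field_simp
    field_simp [hp0] at hq
    linear_combination hq
  -- square root s of p*q
  obtain ⟨s, hs⟩ := IsAlgClosed.exists_pow_nat_eq (p * q) zero_lt_two
  rw [sq] at hs
  have hs0 : s ≠ 0 := by
    intro h; rw [h] at hs
    exact mul_ne_zero hp0 hq0 (by rw [← hs]; ring)
  refine ⟨x, y, s, p * s⁻¹, hx0, hy0, hs0, mul_ne_zero hp0 (inv_ne_zero hs0), hL, ?_, ?_⟩
  · have e1 : (s + s⁻¹) * (p * s⁻¹ + (p * s⁻¹)⁻¹) = p + p⁻¹ + (q + q⁻¹) := by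
      field_simp
      linear_combination (s*s*q - p) * hs
    rw [e1, hq']; ring
  · have e2 : s * (p * s⁻¹) = p := by field_simp
    rw [hκ, e2]
end

section
/- Let $k$ be an algebraically closed field. For every $6$-tuple $(\delta, \delta_L, \delta_R, \kappa_L, \kappa_R, \kappa) \in k^6$ there exists an $8$-tuple of units $(a, b, c, d, x, y, z, w) \in (k^\times)^8$ satisfying simultaneously: $\delta = (a+a^{-1})(b+b^{-1})(c+c^{-1})(d+d^{-1})$, $\delta_L = (x+x^{-1})(y+y^{-1})$, $\delta_R = (z+z^{-1})(w+w^{-1})$, $\kappa_L = (\frac{ab}{x} + \frac{x}{ab})(\frac{cd}{y} + \frac{y}{cd})$, $\kappa_R = (\frac{ad}{w} + \frac{w}{ad})(\frac{bc}{z} + \frac{z}{bc})$, $\kappa = \frac{xy}{zw} + 2 + \frac{zw}{xy}$, and $\kappa = \frac{abcd}{xyzw} + 2 + \frac{xyzw}{abcd}$. -/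
open Polynomial in
lemma exists_fchar {k : Type*} [Field k] [IsAlgClosed k] (t : k) :
    ∃ u : k, u ≠ 0 ∧ u + u⁻¹ = t := by
  have hdeg : (C 1 * X ^ 2 + C (-t) * X + C 1 : k[X]).natDegree = 2 :=
    natDegree_quadratic one_ne_zero
  have hne : (C 1 * X ^ 2 + C (-t) * X + C 1 : k[X]) ≠ 0 := by
    intro h; rw [h] at hdeg; simp at hdeg
  obtain ⟨u, hu⟩ := IsAlgClosed.exists_root (C 1 * X ^ 2 + C (-t) * X + C 1 : k[X])
    (by rw [degree_eq_natDegree hne, hdeg]; exact (by norm_num))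
  rw [IsRoot, eval_add, eval_add, eval_mul, eval_mul] at hu
  simp at hu
  have hu0 : u ≠ 0 := by rintro rfl; simp at hu
  exact ⟨u, hu0, by field_simp; linear_combination hu⟩

open Polynomial in
lemma exists_pair {k : Type*} [Field k] [IsAlgClosed k] (p v : k) (hp : p ≠ 0) :
    ∃ z w : k, z ≠ 0 ∧ w ≠ 0 ∧ z * w = p ∧ (z + z⁻¹) * (w + w⁻¹) = v := by
  obtain ⟨r, hr0, hr⟩ := exists_fchar (k := k) (v - (p + p⁻¹))
  obtain ⟨t, ht⟩ := IsAlgClosed.exists_pow_nat_eq (p * r) (n := 2) (by norm_num)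
  have ht0 : t ≠ 0 := by
    rintro rfl; rw [eq_comm] at ht; simp at ht
    rcases ht with h | h; exact hp h; exact hr0 h
  have hr2 : (r * r + 1) * p = (v * p - (p * p + 1)) * r := by
    field_simp at hr; linear_combination hr
  refine ⟨t, p / t, ht0, div_ne_zero hp ht0, by field_simp, ?_⟩
  field_simp
  linear_combination (p * p + t ^ 2 + p * r + 1 - v * p) * ht + p * hr2

open Polynomial in
lemma exists_quartic {k : Type*} [Field k] [IsAlgClosed k] (P1 P3 P4 δ : k)
    (h1 : P1 ≠ 0) (h3 : P3 ≠ 0) (h4 : P4 ≠ 0) :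
    ∃ a : k, a ≠ 0 ∧
      (a + a⁻¹) * (P1 / a + a / P1) * (P4 * a / P1 + P1 / (P4 * a)) * (P3 / a + a / P3) = δ := by
  set q1 : k[X] := C 1 * X ^ 2 + C 0 * X + C 1 with hq1
  set q2 : k[X] := C P1⁻¹ * X ^ 2 + C 0 * X + C P1 with hq2
  set q3 : k[X] := C (P4 / P1) * X ^ 2 + C 0 * X + C (P1 / P4) with hq3
  set q4 : k[X] := C P3⁻¹ * X ^ 2 + C 0 * X + C P3 with hq4
  have hd1 : q1.natDegree = 2 := natDegree_quadratic one_ne_zero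
  have hd2 : q2.natDegree = 2 := natDegree_quadratic (inv_ne_zero h1)
  have hd3 : q3.natDegree = 2 := natDegree_quadratic (div_ne_zero h4 h1)
  have hd4 : q4.natDegree = 2 := natDegree_quadratic (inv_ne_zero h3)
  have hn1 : q1 ≠ 0 := fun h => by rw [h] at hd1; simp at hd1
  have hn2 : q2 ≠ 0 := fun h => by rw [h] at hd2; simp at hd2
  have hn3 : q3 ≠ 0 := fun h => by rw [h] at hd3; simp at hd3
  have hn4 : q4 ≠ 0 := fun h => by rw [h] at hd4; simp at hd4
  set Q : k[X] := q1 * q2 * q3 * q4 - C δ * X ^ 4 with hQ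
  have hA : (q1 * q2 * q3 * q4).natDegree = 8 := by
    rw [natDegree_mul (mul_ne_zero (mul_ne_zero hn1 hn2) hn3) hn4,
      natDegree_mul (mul_ne_zero hn1 hn2) hn3, natDegree_mul hn1 hn2,
      hd1, hd2, hd3, hd4]
  have hQd : Q.natDegree = 8 := by
    rw [hQ, natDegree_sub_eq_left_of_natDegree_lt]
    · exact hA
    · rw [hA]
      calc (C δ * X ^ 4 : k[X]).natDegree ≤ 4 := natDegree_C_mul_X_pow_le δ 4
        _ < 8 := by norm_num
  have hQne : Q ≠ 0 := fun h => by rw [h] at hQd; simp at hQd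
  obtain ⟨u, hu⟩ := IsAlgClosed.exists_root Q
    (by rw [degree_eq_natDegree hQne, hQd]; exact (by norm_num))
  have heval : (u ^ 2 + 1) * (P1⁻¹ * u ^ 2 + P1) * ((P4 / P1) * u ^ 2 + P1 / P4) *
      (P3⁻¹ * u ^ 2 + P3) - δ * u ^ 4 = 0 := by
    have := hu
    rw [IsRoot, hQ, hq1, hq2, hq3, hq4] at this
    simpa using this
  have hu0 : u ≠ 0 := by
    rintro rfl
    rw [sub_eq_zero] at heval
    simp [h1, h3, h4, _root_.div_eq_zero_iff] at heval
  refine ⟨u, hu0, ?_⟩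
  have e1 : u + u⁻¹ = (u ^ 2 + 1) / u := by field_simp
  have e2 : P1 / u + u / P1 = (P1 ^ 2 + u ^ 2) / (P1 * u) := by field_simp
  have e3 : P4 * u / P1 + P1 / (P4 * u) = (P4 ^ 2 * u ^ 2 + P1 ^ 2) / (P1 * (P4 * u)) := by
    rw [div_add_div _ _ h1 (mul_ne_zero h4 hu0)]; ring_nf
  have e4 : P3 / u + u / P3 = (P3 ^ 2 + u ^ 2) / (P3 * u) := by field_simp
  rw [e1, e2, e3, e4, div_mul_div_comm, div_mul_div_comm, div_mul_div_comm, div_eq_iff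
    (by exact mul_ne_zero (mul_ne_zero (mul_ne_zero hu0 (mul_ne_zero h1 hu0)) (mul_ne_zero h1 (mul_ne_zero h4 hu0))) (mul_ne_zero h3 hu0))]
  field_simp at heval
  linear_combination heval

/-- Proposition 3.2: over an algebraically closed field, for every 6-tuple
`(δ, δ_L, δ_R, κ_L, κ_R, κ)` there is an 8-tuple of units `(a,b,c,d,x,y,z,w)`
satisfying all seven parameter equations simultaneously. -/
theorem param_surjectivity {k : Type*} [Field k] [IsAlgClosed k]
    (δ δL δR κL κR κ : k) :
    ∃ a b c d x y z w : k,
      a ≠ 0 ∧ b ≠ 0 ∧ c ≠ 0 ∧ d ≠ 0 ∧ x ≠ 0 ∧ y ≠ 0 ∧ z ≠ 0 ∧ w ≠ 0 ∧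
      δ = (a + a⁻¹) * (b + b⁻¹) * (c + c⁻¹) * (d + d⁻¹) ∧
      δL = (x + x⁻¹) * (y + y⁻¹) ∧
      δR = (z + z⁻¹) * (w + w⁻¹) ∧
      κL = (a * b / x + x / (a * b)) * (c * d / y + y / (c * d)) ∧
      κR = (a * d / w + w / (a * d)) * (b * c / z + z / (b * c)) ∧
      κ = x * y / (z * w) + 2 + z * w / (x * y) ∧
      κ = a * b * c * d / (x * y * z * w) + 2 + x * y * z * w / (a * b * c * d) := by
  obtain ⟨s, hs0, hs⟩ := exists_fchar (k := k) (κ - 2)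
  obtain ⟨x, y, hx0, hy0, hxy, hδL⟩ := exists_pair (1 : k) δL one_ne_zero
  obtain ⟨z, w, hz0, hw0, hzw, hδR⟩ := exists_pair s⁻¹ δR (inv_ne_zero hs0)
  obtain ⟨uL, vL, huL0, hvL0, huvL, hκL⟩ := exists_pair (1 : k) κL one_ne_zero
  obtain ⟨uR, vR, huR0, hvR0, huvR, hκR⟩ := exists_pair s κR hs0
  set P1 := uL * x with hP1
  set P3 := uR * w with hP3
  set P4 := vR * z with hP4
  have hP10 : P1 ≠ 0 := mul_ne_zero huL0 hx0
  have hP30 : P3 ≠ 0 := mul_ne_zero huR0 hw0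
  have hP40 : P4 ≠ 0 := mul_ne_zero hvR0 hz0
  have hss : s * s⁻¹ = 1 := mul_inv_cancel₀ hs0
  have hP34 : P3 * P4 = 1 := by
    rw [hP3, hP4]; linear_combination (z * w) * huvR + s * hzw + hss
  have hP34' : uR * w * (vR * z) = 1 := by
    linear_combination (z * w) * huvR + s * hzw + hss
  have hvL : vL = uL⁻¹ := eq_inv_of_mul_eq_one_right huvL
  have hy : y = x⁻¹ := eq_inv_of_mul_eq_one_right hxy
  obtain ⟨a, ha0, hδ⟩ := exists_quartic P1 P3 P4 δ hP10 hP30 hP40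
  refine ⟨a, P1 / a, P4 * a / P1, P3 / a, x, y, z, w, ha0,
    div_ne_zero hP10 ha0, div_ne_zero (mul_ne_zero hP40 ha0) hP10, div_ne_zero hP30 ha0,
    hx0, hy0, hz0, hw0, ?_, hδL.symm, hδR.symm, ?_, ?_, ?_, ?_⟩
  · rw [inv_div, inv_div, inv_div]; exact hδ.symm
  · -- κL
    have eA : a * (P1 / a) / x + x / (a * (P1 / a)) = uL + uL⁻¹ := by
      rw [hP1]; field_simp
    have hcd : P4 * a / P1 * (P3 / a) = vL * y := by
      rw [hvL, hy, hP1]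
      field_simp
      linear_combination hP34'
    have eB : P4 * a / P1 * (P3 / a) / y + y / (P4 * a / P1 * (P3 / a)) = vL + vL⁻¹ := by
      rw [hcd]; field_simp
    rw [eA, eB]; exact hκL.symm
  · -- κR
    have eC : a * (P3 / a) / w + w / (a * (P3 / a)) = uR + uR⁻¹ := by
      rw [hP3]; field_simp
    have eD : P1 / a * (P4 * a / P1) / z + z / (P1 / a * (P4 * a / P1)) = vR + vR⁻¹ := by
      rw [hP4]; field_simp
    rw [eC, eD]; exact hκR.symm
  · rw [hxy, hzw, one_div, inv_inv, div_one]; linear_combination -hs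
  · have habcd : a * (P1 / a) * (P4 * a / P1) * (P3 / a) = 1 := by
      field_simp
      linear_combination hP34'
    have hxyzw : x * y * z * w = s⁻¹ := by rw [mul_assoc, hzw, hxy, one_mul]
    rw [habcd, hxyzw, one_div, inv_inv, div_one]; linear_combination -hs
end
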